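/- arXiv:1306.3706 — 2 statements merged into one kernel-verified Lean document; each statement's English description precedes it below -/
import Mathlib

section
/- Assume E‖X‖ < ∞ and let λ_n be a sequence of (possibly data-dependent) random pilot estimates with λ_n → λ_∞ in probability for some fixed λ_∞ ∈ ℝ^p. Then for each fixed θ ∈ ℝ^p, the empirical local case-control risk converges in probability: Q̂_{λ_n}(θ) → Q_{λ_∞}(θ). -/
open MeasureTheory ProbabilityTheory Real Filter
open scoped ENNReal NNReal RealInnerProductSpace Topology BoundedContinuousFunction

noncomputable section

/-- Shorthand for `ℝ^d` with the Euclidean inner product. -/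
abbrev Evec (d : ℕ) := EuclideanSpace ℝ (Fin d)

/-- The logistic sigmoid `σ(t) = eᵗ / (1 + eᵗ)`. -/
def sigm (t : ℝ) : ℝ := Real.exp t / (1 + Real.exp t)

/-- The soft hinge function `h(η; π) = -π η + log (1 + e^η)`. -/
def softHinge (η pr : ℝ) : ℝ := -pr * η + Real.log (1 + Real.exp η)

variable {d : ℕ}

/-- The joint law of `(X, Y)` on `ℝ^d × ℝ` determined by the marginal law `ν` of `X`
and the conditional probability `pf x = P(Y = 1 | X = x)`; `Y ∈ {0, 1}`. -/
def jointLaw (ν : Measure (Evec d)) (pf : Evec d → ℝ) : Measure (Evec d × ℝ) :=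
  ν.bind fun x => ENNReal.ofReal (pf x) • Measure.dirac (x, (1 : ℝ)) +
    ENNReal.ofReal (1 - pf x) • Measure.dirac (x, (0 : ℝ))

/-- The logistic loss `ρ(θ; x, y) = -y θ'x + log (1 + exp (θ'x))` (intercept absorbed). -/
def logisticLoss (θ : Evec d) (xy : Evec d × ℝ) : ℝ :=
  -xy.2 * ⟪θ, xy.1⟫ + Real.log (1 + Real.exp ⟪θ, xy.1⟫)

/-- The conditional log-odds `f(x) = logit p(x)`. -/
def flogit (pf : Evec d → ℝ) (x : Evec d) : ℝ := Real.log (pf x / (1 - pf x))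

/-- Local case-control acceptance probability `a_λ(x, y) = |y - σ(λ'x)|`. -/
def accProb (lam : Evec d) (xy : Evec d × ℝ) : ℝ := |xy.2 - sigm ⟪lam, xy.1⟫|

/-- Marginal acceptance probability `ā(λ) = E[a_λ(X, Y)]`. -/
def aBar (μ : Measure (Evec d × ℝ)) (lam : Evec d) : ℝ := ∫ xy, accProb lam xy ∂μ

/-- Conditional acceptance probability `â_λ(x) = σ(λ'x)(1 - p(x)) + (1 - σ(λ'x)) p(x)`. -/
def aHat (pf : Evec d → ℝ) (lam x : Evec d) : ℝ :=
  sigm ⟪lam, x⟫ * (1 - pf x) + (1 - sigm ⟪lam, x⟫) * pf x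

/-- The tilted (biased subsampling) measure `dP_λ = a_λ dP / ā(λ)`. -/
def tiltedLaw (μ : Measure (Evec d × ℝ)) (lam : Evec d) : Measure (Evec d × ℝ) :=
  μ.withDensity fun xy => ENNReal.ofReal (accProb lam xy / aBar μ lam)

/-- Population risk under the tilted measure: `R_λ(θ) = E_{P_λ}[ρ(θ; X, Y)]`. -/
def Rpop (μ : Measure (Evec d × ℝ)) (lam θ : Evec d) : ℝ :=
  ∫ xy, logisticLoss θ xy ∂(tiltedLaw μ lam)

/-- Recentred population risk `Q_λ(θ) = R_λ(θ - λ)`. -/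
def Qpop (μ : Measure (Evec d × ℝ)) (lam θ : Evec d) : ℝ := Rpop μ lam (θ - lam)

/-- Nonseparability: no nonzero direction `v` separates the two classes. -/
def NonSep (μ : Measure (Evec d × ℝ)) : Prop :=
  ¬ ∃ v : Evec d, v ≠ 0 ∧ μ {xy | xy.2 = 0 ∧ 0 < ⟪v, xy.1⟫} = 0 ∧
    μ {xy | xy.2 = 1 ∧ ⟪v, xy.1⟫ < 0} = 0

/-- Nondegeneracy: there is no nonzero `v` with `E|v'X| = 0`. -/
def NonDegen (μ : Measure (Evec d × ℝ)) : Prop :=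
  ∀ v : Evec d, v ≠ 0 → ∫ xy, |⟪v, xy.1⟫| ∂μ ≠ 0

/-- The (recentred) empirical local case-control risk
`Q̂_{λ_n}(θ) = -(n ā(λ_n))⁻¹ ∑_{i<n} z_i^{λ_n} [y_i (θ-λ_n)'x_i - log(1 + e^{(θ-λ_n)'x_i})]`,
where `z_i^λ = 1{u_i ≤ a_λ(x_i, y_i)}`. -/
def Qhat {Ω : Type*} (μ : Measure (Evec d × ℝ)) (X : ℕ → Ω → Evec d) (Y U : ℕ → Ω → ℝ)
    (Lam : ℕ → Ω → Evec d) (n : ℕ) (θ : Evec d) (ω : Ω) : ℝ :=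
  -((n : ℝ) * aBar μ (Lam n ω))⁻¹ * ∑ i ∈ Finset.range n,
    (if U i ω ≤ accProb (Lam n ω) (X i ω, Y i ω) then (1 : ℝ) else 0) *
      (Y i ω * ⟪θ - Lam n ω, X i ω⟫ - Real.log (1 + Real.exp ⟪θ - Lam n ω, X i ω⟫))

/-! Write `vᵢ = ((xᵢ, yᵢ), uᵢ)` and `g_λ(v) = 1{u ≤ a_λ(x, y)} ρ(θ - λ; x, y)`, so that
`Q̂_λ(θ) = ā(λ)⁻¹ · (1/n) ∑ g_λ(vᵢ)`. The `vᵢ` are pairwise independent with law `μ ⊗ U(0,1)`,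
and integrating out `u` gives `E g_λ = ā(λ) Q_λ(θ)`; the strong law settles a fixed pilot.
Since `σ` and `t ↦ log (1 + eᵗ)` are 1-Lipschitz, `‖λ - λ∞‖ ≤ r` forces
`|g_λ - g_λ∞| ≤ 1{|u - a_λ∞| ≤ r ‖x‖} |ρ| + 2 r ‖x‖`, whose mean tends to `0` with `r` because
`{u = a_λ∞(x, y)}` is null. The strong law for this bound at countably many `r` then controls
the random pilot along every almost surely convergent subsequence, and the subsequence criterion
turns this into convergence in probability. -/

lemma sigm_eq_sigmoid : sigm = Real.sigmoid := by
  ext t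
  rw [sigm, Real.sigmoid_def, Real.exp_neg]
  field_simp
  ring

lemma lipschitzWith_sigmoid : LipschitzWith 1 Real.sigmoid := by
  refine lipschitzWith_of_nnnorm_deriv_le differentiable_sigmoid fun t => ?_
  rw [Real.deriv_sigmoid, ← NNReal.coe_le_coe, coe_nnnorm, NNReal.coe_one, Real.norm_eq_abs,
    abs_of_nonneg (mul_nonneg (Real.sigmoid_nonneg t) (sub_nonneg.2 (Real.sigmoid_le_one t)))]
  nlinarith [Real.sigmoid_nonneg t, Real.sigmoid_le_one t]

lemma hasDerivAt_log_one_add_exp (t : ℝ) :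
    HasDerivAt (fun t => Real.log (1 + Real.exp t)) (sigm t) t := by
  simpa [sigm] using ((Real.hasDerivAt_exp t).const_add 1).log (by positivity)

lemma lipschitzWith_log_one_add_exp : LipschitzWith 1 fun t => Real.log (1 + Real.exp t) := by
  refine lipschitzWith_of_nnnorm_deriv_le (fun t => (hasDerivAt_log_one_add_exp t).differentiableAt)
    fun t => ?_
  rw [(hasDerivAt_log_one_add_exp t).deriv, sigm_eq_sigmoid, ← NNReal.coe_le_coe, coe_nnnorm,
    NNReal.coe_one, Real.norm_eq_abs, abs_of_nonneg (Real.sigmoid_nonneg t)]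
  exact Real.sigmoid_le_one t

lemma abs_inner_sub_inner_le (v w x : Evec d) : |⟪v, x⟫ - ⟪w, x⟫| ≤ ‖v - w‖ * ‖x‖ := by
  rw [← inner_sub_left]
  exact abs_real_inner_le_norm _ _

lemma abs_accProb_sub_le (lam lam' : Evec d) (xy : Evec d × ℝ) :
    |accProb lam xy - accProb lam' xy| ≤ ‖lam - lam'‖ * ‖xy.1‖ := by
  have hσ := lipschitzWith_sigmoid.dist_le_mul ⟪lam, xy.1⟫ ⟪lam', xy.1⟫
  rw [NNReal.coe_one, one_mul, Real.dist_eq, Real.dist_eq] at hσ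
  calc |accProb lam xy - accProb lam' xy|
      ≤ |(xy.2 - sigm ⟪lam, xy.1⟫) - (xy.2 - sigm ⟪lam', xy.1⟫)| := abs_abs_sub_abs_le_abs_sub _ _
    _ = |sigm ⟪lam, xy.1⟫ - sigm ⟪lam', xy.1⟫| := by rw [sub_sub_sub_cancel_left, abs_sub_comm]
    _ ≤ ‖lam - lam'‖ * ‖xy.1‖ := by
      rw [sigm_eq_sigmoid]
      exact hσ.trans (abs_inner_sub_inner_le _ _ _)

lemma accProb_mem_Ioo (lam : Evec d) {xy : Evec d × ℝ} (hy : xy.2 = 0 ∨ xy.2 = 1) :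
    accProb lam xy ∈ Set.Ioo 0 1 := by
  have h0 := Real.sigmoid_pos ⟪lam, xy.1⟫
  have h1 := Real.sigmoid_lt_one ⟪lam, xy.1⟫
  rcases hy with hy | hy <;> rw [accProb, hy, sigm_eq_sigmoid]
  · rw [zero_sub, abs_neg, abs_of_pos h0]
    exact ⟨h0, h1⟩
  · rw [abs_of_pos (sub_pos.2 h1)]
    exact ⟨sub_pos.2 h1, sub_lt_self 1 h0⟩

lemma abs_logisticLoss_sub_le {xy : Evec d × ℝ} (hy : |xy.2| ≤ 1) (w w' : Evec d) :
    |logisticLoss w xy - logisticLoss w' xy| ≤ 2 * (‖w - w'‖ * ‖xy.1‖) := by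
  have hinner := abs_inner_sub_inner_le w w' xy.1
  have hsoft := lipschitzWith_log_one_add_exp.dist_le_mul ⟪w, xy.1⟫ ⟪w', xy.1⟫
  rw [NNReal.coe_one, one_mul, Real.dist_eq, Real.dist_eq] at hsoft
  have hlin : |xy.2 * (⟪w, xy.1⟫ - ⟪w', xy.1⟫)| ≤ |⟪w, xy.1⟫ - ⟪w', xy.1⟫| := by
    rw [abs_mul]
    exact mul_le_of_le_one_left (abs_nonneg _) hy
  calc |logisticLoss w xy - logisticLoss w' xy|
      = |-(xy.2 * (⟪w, xy.1⟫ - ⟪w', xy.1⟫)) + (Real.log (1 + Real.exp ⟪w, xy.1⟫)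
          - Real.log (1 + Real.exp ⟪w', xy.1⟫))| := by rw [logisticLoss, logisticLoss]; ring_nf
    _ ≤ |xy.2 * (⟪w, xy.1⟫ - ⟪w', xy.1⟫)| + |Real.log (1 + Real.exp ⟪w, xy.1⟫)
          - Real.log (1 + Real.exp ⟪w', xy.1⟫)| := by
      rw [← abs_neg (xy.2 * _)]; exact abs_add_le _ _
    _ ≤ 2 * (‖w - w'‖ * ‖xy.1‖) := by linarith

lemma abs_logisticLoss_le {xy : Evec d × ℝ} (hy : |xy.2| ≤ 1) (w : Evec d) :
    |logisticLoss w xy| ≤ Real.log 2 + 2 * (‖w‖ * ‖xy.1‖) := by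
  have h := abs_logisticLoss_sub_le hy w 0
  have h0 : logisticLoss 0 xy = Real.log 2 := by norm_num [logisticLoss]
  rw [h0, sub_zero] at h
  have h2 := abs_sub_abs_le_abs_sub (logisticLoss w xy) (Real.log 2)
  rw [abs_of_nonneg (Real.log_nonneg one_le_two)] at h2
  linarith

lemma continuous_accProb :
    Continuous fun p : Evec d × (Evec d × ℝ) => accProb p.1 p.2 := by
  simp only [accProb, sigm_eq_sigmoid]
  fun_prop

lemma measurable_accProb (lam : Evec d) : Measurable (accProb lam) :=
  (continuous_accProb.comp (Continuous.prodMk_right lam)).measurable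

lemma accProb_nonneg (lam : Evec d) (xy : Evec d × ℝ) : 0 ≤ accProb lam xy := abs_nonneg _

lemma abs_le_one_of_eq_zero_or_eq_one {y : ℝ} (hy : y = 0 ∨ y = 1) : |y| ≤ 1 := by
  rcases hy with rfl | rfl <;> norm_num

section Population

variable {μ : Measure (Evec d × ℝ)}

lemma ae_norm_accProb_le_one (hY : ∀ᵐ xy ∂μ, xy.2 = 0 ∨ xy.2 = 1) (lam : Evec d) :
    ∀ᵐ xy ∂μ, ‖accProb lam xy‖ ≤ 1 := by
  filter_upwards [hY] with xy hy
  rw [Real.norm_eq_abs, abs_of_nonneg (accProb_nonneg lam xy)]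
  exact (accProb_mem_Ioo lam hy).2.le

lemma integrable_accProb [IsFiniteMeasure μ] (hY : ∀ᵐ xy ∂μ, xy.2 = 0 ∨ xy.2 = 1)
    (lam : Evec d) : Integrable (accProb lam) μ :=
  (integrable_const 1).mono' (measurable_accProb lam).aestronglyMeasurable
    (ae_norm_accProb_le_one hY lam)

lemma aBar_pos [IsProbabilityMeasure μ] (hY : ∀ᵐ xy ∂μ, xy.2 = 0 ∨ xy.2 = 1) (lam : Evec d) :
    0 < aBar μ lam := by
  rw [aBar, integral_pos_iff_support_of_nonneg_ae (Eventually.of_forall (accProb_nonneg lam))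
    (integrable_accProb hY lam), pos_iff_ne_zero, Ne, Measure.measure_support_eq_zero_iff μ]
  intro hzero
  obtain ⟨xy, hy, hxy⟩ := (hY.and hzero).exists
  exact (accProb_mem_Ioo lam hy).1.ne' hxy

lemma continuous_aBar [IsFiniteMeasure μ] (hY : ∀ᵐ xy ∂μ, xy.2 = 0 ∨ xy.2 = 1) :
    Continuous (aBar μ) :=
  continuous_of_dominated (fun lam => (measurable_accProb lam).aestronglyMeasurable)
    (ae_norm_accProb_le_one hY) (integrable_const 1)
    (Eventually.of_forall fun xy => continuous_accProb.comp (Continuous.prodMk_left xy))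

lemma integrable_logisticLoss [IsFiniteMeasure μ] (hY : ∀ᵐ xy ∂μ, |xy.2| ≤ 1)
    (hX : Integrable (fun xy : Evec d × ℝ => ‖xy.1‖) μ) (w : Evec d) :
    Integrable (logisticLoss w) μ := by
  refine ((integrable_const (Real.log 2)).add ((hX.const_mul ‖w‖).const_mul 2)).mono' ?_ ?_
  · unfold logisticLoss
    fun_prop
  · filter_upwards [hY] with xy hy
    exact abs_logisticLoss_le hy w

lemma integral_tiltedLaw (lam : Evec d) (f : Evec d × ℝ → ℝ) :
    ∫ xy, f xy ∂tiltedLaw μ lam = (aBar μ lam)⁻¹ * ∫ xy, accProb lam xy * f xy ∂μ := by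
  have hā : 0 ≤ aBar μ lam := integral_nonneg (accProb_nonneg lam)
  rw [tiltedLaw, integral_withDensity_eq_integral_toReal_smul
    (((measurable_accProb lam).div_const _).ennreal_ofReal)
    (Eventually.of_forall fun _ => ENNReal.ofReal_lt_top), ← integral_const_mul]
  congr 1 with xy
  rw [ENNReal.toReal_ofReal (div_nonneg (accProb_nonneg lam xy) hā), smul_eq_mul]
  ring

end Population

lemma abs_ite_le_sub_ite_le_mul_le {u a a' s : ℝ} (h : |a' - a| ≤ s) (c : ℝ) :
    |((if u ≤ a' then 1 else 0) - (if u ≤ a then 1 else 0)) * c| ≤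
      if |u - a| ≤ s then |c| else 0 := by
  have hband : |u - a| ≤ s → |c| ≤ if |u - a| ≤ s then |c| else 0 := fun hu => by rw [if_pos hu]
  rw [abs_le] at h
  by_cases h' : u ≤ a' <;> by_cases hu : u ≤ a
  · simp only [h', hu, if_true, sub_self, zero_mul, abs_zero]; positivity
  · simpa [h', hu] using hband (abs_le.2 ⟨by linarith, by linarith⟩)
  · simpa [h', hu] using hband (abs_le.2 ⟨by linarith, by linarith⟩)
  · simp only [h', hu, if_false, sub_self, zero_mul, abs_zero]; positivity

local notation "ν₀" => volume.restrict (Set.Ioo (0 : ℝ) 1)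

lemma integral_ite_le_Ioo {a : ℝ} (h0 : 0 ≤ a) (h1 : a < 1) :
    ∫ u, (if u ≤ a then (1 : ℝ) else 0) ∂ν₀ = a := by
  have hind : (fun u : ℝ => if u ≤ a then (1 : ℝ) else 0) = (Set.Iic a).indicator 1 := by
    ext u; simp [Set.indicator]
  have hset : Set.Iic a ∩ Set.Ioo 0 1 = Set.Ioc 0 a := by
    ext u; simp only [Set.mem_inter_iff, Set.mem_Iic, Set.mem_Ioo, Set.mem_Ioc]
    constructor
    · rintro ⟨hua, hu0, -⟩; exact ⟨hu0, hua⟩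
    · rintro ⟨hu0, hua⟩; exact ⟨hua, hu0, hua.trans_lt h1⟩
  rw [hind, integral_indicator_one measurableSet_Iic, measureReal_restrict_apply measurableSet_Iic,
    hset, Real.volume_real_Ioc_of_le h0, sub_zero]

/-- `v = ((x, y), u)` is a labelled point together with its uniform acceptance draw `u`. -/
def acceptedLoss (θ lam : Evec d) (v : (Evec d × ℝ) × ℝ) : ℝ :=
  (if v.2 ≤ accProb lam v.1 then 1 else 0) * logisticLoss (θ - lam) v.1

def acceptedLossModulus (θ lam : Evec d) (r : ℝ) (v : (Evec d × ℝ) × ℝ) : ℝ :=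
  (if |v.2 - accProb lam v.1| ≤ r * ‖v.1.1‖ then |logisticLoss (θ - lam) v.1| else 0) +
    2 * (r * ‖v.1.1‖)

lemma measurable_uncurry_acceptedLoss (θ : Evec d) :
    Measurable (Function.uncurry (acceptedLoss θ)) := by
  refine Measurable.mul ?_ ?_
  · refine Measurable.ite (measurableSet_le (by fun_prop) ?_) measurable_const measurable_const
    exact continuous_accProb.measurable.comp
      (measurable_fst.prodMk (measurable_fst.comp measurable_snd))
  · unfold logisticLoss
    fun_prop

lemma measurable_acceptedLoss (θ lam : Evec d) : Measurable (acceptedLoss θ lam) :=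
  (measurable_uncurry_acceptedLoss θ).comp measurable_prodMk_left

lemma measurable_acceptedLossModulus (θ lam : Evec d) (r : ℝ) :
    Measurable (acceptedLossModulus θ lam r) := by
  refine Measurable.add ?_ (by fun_prop)
  refine Measurable.ite (measurableSet_le ?_ (by fun_prop)) ?_ measurable_const
  · exact (measurable_snd.sub ((measurable_accProb lam).comp measurable_fst)).abs
  · unfold logisticLoss
    fun_prop

lemma abs_acceptedLoss_sub_le {v : (Evec d × ℝ) × ℝ} (hy : |v.1.2| ≤ 1) (θ : Evec d)
    {lam lam' : Evec d} {r : ℝ} (hr : ‖lam' - lam‖ ≤ r) :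
    |acceptedLoss θ lam' v - acceptedLoss θ lam v| ≤ acceptedLossModulus θ lam r v := by
  have hx := norm_nonneg v.1.1
  have hloss : |logisticLoss (θ - lam') v.1 - logisticLoss (θ - lam) v.1| ≤ 2 * (r * ‖v.1.1‖) := by
    refine (abs_logisticLoss_sub_le hy _ _).trans ?_
    rw [sub_sub_sub_cancel_left, norm_sub_rev]
    gcongr
  have hacc : |accProb lam' v.1 - accProb lam v.1| ≤ r * ‖v.1.1‖ :=
    (abs_accProb_sub_le lam' lam v.1).trans (by gcongr)
  have hz : |(if v.2 ≤ accProb lam' v.1 then (1 : ℝ) else 0)| ≤ 1 := by split_ifs <;> simp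
  calc |acceptedLoss θ lam' v - acceptedLoss θ lam v|
      = |(if v.2 ≤ accProb lam' v.1 then (1 : ℝ) else 0) *
            (logisticLoss (θ - lam') v.1 - logisticLoss (θ - lam) v.1) +
          ((if v.2 ≤ accProb lam' v.1 then 1 else 0) - (if v.2 ≤ accProb lam v.1 then 1 else 0)) *
            logisticLoss (θ - lam) v.1| := by rw [acceptedLoss, acceptedLoss]; ring_nf
    _ ≤ 2 * (r * ‖v.1.1‖) +
          (if |v.2 - accProb lam v.1| ≤ r * ‖v.1.1‖ then |logisticLoss (θ - lam) v.1| else 0) := by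
      refine (abs_add_le _ _).trans (add_le_add ?_ (abs_ite_le_sub_ite_le_mul_le hacc _))
      rw [abs_mul]
      exact (mul_le_of_le_one_left (abs_nonneg _) hz).trans hloss
    _ = acceptedLossModulus θ lam r v := add_comm _ _

section Sampling

variable {μ : Measure (Evec d × ℝ)}

lemma integrable_acceptedLoss [IsFiniteMeasure μ] (hY : ∀ᵐ xy ∂μ, |xy.2| ≤ 1)
    (hX : Integrable (fun xy : Evec d × ℝ => ‖xy.1‖) μ) (θ lam : Evec d) :
    Integrable (acceptedLoss θ lam) (μ.prod ν₀) := by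
  refine ((integrable_logisticLoss hY hX (θ - lam)).comp_fst ν₀).abs.mono'
    (measurable_acceptedLoss θ lam).aestronglyMeasurable (Eventually.of_forall fun v => ?_)
  rw [acceptedLoss, Real.norm_eq_abs, abs_mul]
  refine mul_le_of_le_one_left (abs_nonneg _) ?_
  split_ifs <;> simp

lemma abs_acceptedLossModulus_le (θ lam : Evec d) (r : ℝ) (v : (Evec d × ℝ) × ℝ) :
    |acceptedLossModulus θ lam r v| ≤ |logisticLoss (θ - lam) v.1| + 2 * (|r| * ‖v.1.1‖) := by
  have hite : |(if |v.2 - accProb lam v.1| ≤ r * ‖v.1.1‖ then |logisticLoss (θ - lam) v.1|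
      else 0)| ≤ |logisticLoss (θ - lam) v.1| := by split_ifs <;> simp
  refine (abs_add_le _ _).trans (add_le_add hite ?_)
  rw [abs_mul, abs_mul, abs_two, abs_norm]

lemma integrable_acceptedLossModulus [IsFiniteMeasure μ] (hY : ∀ᵐ xy ∂μ, |xy.2| ≤ 1)
    (hX : Integrable (fun xy : Evec d × ℝ => ‖xy.1‖) μ) (θ lam : Evec d) (r : ℝ) :
    Integrable (acceptedLossModulus θ lam r) (μ.prod ν₀) :=
  (((integrable_logisticLoss hY hX (θ - lam)).comp_fst ν₀).abs.add
    (((hX.comp_fst ν₀).const_mul |r|).const_mul 2)).mono'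
    (measurable_acceptedLossModulus θ lam r).aestronglyMeasurable
    (Eventually.of_forall (abs_acceptedLossModulus_le θ lam r))

lemma integral_acceptedLoss [IsProbabilityMeasure μ] (hY : ∀ᵐ xy ∂μ, xy.2 = 0 ∨ xy.2 = 1)
    (hX : Integrable (fun xy : Evec d × ℝ => ‖xy.1‖) μ) (θ lam : Evec d) :
    ∫ v, acceptedLoss θ lam v ∂(μ.prod ν₀) = aBar μ lam * Qpop μ lam θ := by
  have hY' : ∀ᵐ xy ∂μ, |xy.2| ≤ 1 := hY.mono fun _ => abs_le_one_of_eq_zero_or_eq_one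
  have hinner : (fun xy => ∫ u, acceptedLoss θ lam (xy, u) ∂ν₀)
      =ᵐ[μ] fun xy => accProb lam xy * logisticLoss (θ - lam) xy := by
    filter_upwards [hY] with xy hy
    simp only [acceptedLoss]
    rw [integral_mul_const, integral_ite_le_Ioo (accProb_mem_Ioo lam hy).1.le
      (accProb_mem_Ioo lam hy).2]
  rw [integral_prod _ (integrable_acceptedLoss hY' hX θ lam), integral_congr_ae hinner, Qpop, Rpop,
    integral_tiltedLaw, mul_inv_cancel_left₀ (aBar_pos hY lam).ne']

lemma tendsto_integral_acceptedLossModulus [IsFiniteMeasure μ] (hY : ∀ᵐ xy ∂μ, |xy.2| ≤ 1)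
    (hX : Integrable (fun xy : Evec d × ℝ => ‖xy.1‖) μ) (θ lam : Evec d) :
    Tendsto (fun r => ∫ v, acceptedLossModulus θ lam r v ∂(μ.prod ν₀)) (𝓝 0) (𝓝 0) := by
  have hbound : ∀ᶠ r in 𝓝 (0 : ℝ), ∀ᵐ v ∂(μ.prod ν₀), ‖acceptedLossModulus θ lam r v‖ ≤
      |logisticLoss (θ - lam) v.1| + 2 * ‖v.1.1‖ := by
    filter_upwards [Ioo_mem_nhds (neg_one_lt_zero) one_pos] with r hr
    refine Eventually.of_forall fun v => ?_
    rw [Real.norm_eq_abs]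
    refine (abs_acceptedLossModulus_le θ lam r v).trans ?_
    gcongr
    exact mul_le_of_le_one_left (norm_nonneg _) (abs_le.2 ⟨hr.1.le, hr.2.le⟩)
  have hnull : ∀ᵐ v ∂(μ.prod ν₀), v.2 ≠ accProb lam v.1 := by
    refine (Measure.ae_prod_iff_ae_ae ?_).2
      (Eventually.of_forall fun xy => Measure.ae_ne ν₀ (accProb lam xy))
    exact (measurableSet_eq_fun measurable_snd ((measurable_accProb lam).comp measurable_fst)).compl
  have hlim : ∀ᵐ v ∂(μ.prod ν₀), Tendsto (fun r => acceptedLossModulus θ lam r v) (𝓝 0) (𝓝 0) := by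
    filter_upwards [hnull] with v hv
    unfold acceptedLossModulus
    have hgap : 0 < |v.2 - accProb lam v.1| := abs_pos.2 (sub_ne_zero.2 hv)
    have hscale : Tendsto (fun r : ℝ => r * ‖v.1.1‖) (𝓝 0) (𝓝 0) := by
      simpa using (tendsto_id (x := 𝓝 (0 : ℝ))).mul_const ‖v.1.1‖
    have hite : ∀ᶠ r in 𝓝 (0 : ℝ), (if |v.2 - accProb lam v.1| ≤ r * ‖v.1.1‖ then
        |logisticLoss (θ - lam) v.1| else 0) = 0 := by
      filter_upwards [hscale.eventually (gt_mem_nhds hgap)] with r hr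
      rw [if_neg (not_le.2 hr)]
    simpa using (tendsto_const_nhds.congr' (EventuallyEq.symm hite)).add (hscale.const_mul 2)
  simpa using tendsto_integral_filter_of_dominated_convergence _
    (Eventually.of_forall fun r => (measurable_acceptedLossModulus θ lam r).aestronglyMeasurable)
    hbound (((integrable_logisticLoss hY hX (θ - lam)).comp_fst ν₀).abs.add
      ((hX.comp_fst ν₀).const_mul 2)) hlim

end Sampling

def sampleMean {α : Type*} (f : α → ℝ) (v : ℕ → α) (n : ℕ) : ℝ :=
  (∑ i ∈ Finset.range n, f (v i)) / n

section StrongLaw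

variable {Ω α β γ δ : Type*} [MeasurableSpace Ω] [MeasurableSpace α] [MeasurableSpace β]
  [MeasurableSpace γ] [MeasurableSpace δ]

lemma measurePreserving_prodProdProdComm (μa : Measure α) (μb : Measure β) (μc : Measure γ)
    (μd : Measure δ) [SFinite μa] [SFinite μb] [SFinite μc] [SFinite μd] :
    MeasurePreserving (fun p : (α × β) × γ × δ => ((p.1.1, p.2.1), (p.1.2, p.2.2)))
      ((μa.prod μb).prod (μc.prod μd)) ((μa.prod μc).prod (μb.prod μd)) := by
  have inner : MeasurePreserving (fun q : β × γ × δ => (q.2.1, (q.1, q.2.2)))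
      (μb.prod (μc.prod μd)) (μc.prod (μb.prod μd)) := by
    have := ((measurePreserving_prodAssoc μc μb μd).comp
      (Measure.measurePreserving_swap.prod (MeasurePreserving.id μd))).comp
      (measurePreserving_prodAssoc μb μc μd).symm
    exact this
  have := ((measurePreserving_prodAssoc μa μc (μb.prod μd)).symm.comp
    ((MeasurePreserving.id μa).prod inner)).comp (measurePreserving_prodAssoc μa μb (μc.prod μd))
  exact this

variable {P : Measure Ω} [IsFiniteMeasure P]

lemma ProbabilityTheory.IndepFun.prodMk_prodMk_of_indepFun {A A' : Ω → α} {B B' : Ω → β}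
    (hA : Measurable A) (hA' : Measurable A') (hB : Measurable B) (hB' : Measurable B')
    (hAA' : IndepFun A A' P) (hBB' : IndepFun B B' P)
    (hAB : IndepFun (fun ω => (A ω, A' ω)) (fun ω => (B ω, B' ω)) P) :
    IndepFun (fun ω => (A ω, B ω)) (fun ω => (A' ω, B' ω)) P := by
  have hAB₁ : IndepFun A B P := hAB.comp measurable_fst measurable_fst
  have hAB₂ : IndepFun A' B' P := hAB.comp measurable_snd measurable_snd
  have hshuffle := measurePreserving_prodProdProdComm (P.map A) (P.map A') (P.map B) (P.map B')
  rw [indepFun_iff_map_prod_eq_prod_map_map (hA.prodMk hB).aemeasurable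
    (hA'.prodMk hB').aemeasurable, hAB₁.map_prod_eq_prod_map_map hA.aemeasurable hB.aemeasurable,
    hAB₂.map_prod_eq_prod_map_map hA'.aemeasurable hB'.aemeasurable, ← hshuffle.map_eq,
    ← hAA'.map_prod_eq_prod_map_map hA.aemeasurable hA'.aemeasurable,
    ← hBB'.map_prod_eq_prod_map_map hB.aemeasurable hB'.aemeasurable,
    ← hAB.map_prod_eq_prod_map_map (hA.prodMk hA').aemeasurable (hB.prodMk hB').aemeasurable,
    Measure.map_map hshuffle.measurable ((hA.prodMk hA').prodMk (hB.prodMk hB'))]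
  rfl

variable {W : ℕ → Ω → α} {U : ℕ → Ω → β} {μ : Measure α} {ν : Measure β}

lemma map_prodMk_eq_prod (hW : ∀ i, Measurable (W i)) (hU : ∀ i, Measurable (U i))
    (hWU : IndepFun (fun ω i => W i ω) (fun ω i => U i ω) P)
    (hWlaw : ∀ i, P.map (W i) = μ) (hUlaw : ∀ i, P.map (U i) = ν) (i : ℕ) :
    P.map (fun ω => (W i ω, U i ω)) = μ.prod ν := by
  rw [((hWU.comp (measurable_pi_apply i) (measurable_pi_apply i)).map_prod_eq_prod_map_map
    (hW i).aemeasurable (hU i).aemeasurable), hWlaw i, hUlaw i]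

theorem ae_tendsto_sampleMean_prodMk [SFinite μ] [SFinite ν]
    (hW : ∀ i, Measurable (W i)) (hU : ∀ i, Measurable (U i))
    (hWindep : Pairwise (Function.onFun (IndepFun · · P) W))
    (hUindep : Pairwise (Function.onFun (IndepFun · · P) U))
    (hWU : IndepFun (fun ω i => W i ω) (fun ω i => U i ω) P)
    (hWlaw : ∀ i, P.map (W i) = μ) (hUlaw : ∀ i, P.map (U i) = ν)
    {f : α × β → ℝ} (hf : Measurable f) (hfi : Integrable f (μ.prod ν)) :
    ∀ᵐ ω ∂P, Tendsto (sampleMean f fun i => (W i ω, U i ω)) atTop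
      (𝓝 (∫ v, f v ∂(μ.prod ν))) := by
  have hV (i : ℕ) : Measurable fun ω => (W i ω, U i ω) := (hW i).prodMk (hU i)
  have hlaw := map_prodMk_eq_prod hW hU hWU hWlaw hUlaw
  have hident (i : ℕ) : IdentDistrib (fun ω => (W i ω, U i ω)) (fun ω => (W 0 ω, U 0 ω)) P P :=
    ⟨(hV i).aemeasurable, (hV 0).aemeasurable, by rw [hlaw, hlaw]⟩
  have hindep : Pairwise fun i j => IndepFun (fun ω => f (W i ω, U i ω))
      (fun ω => f (W j ω, U j ω)) P := fun i j hij =>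
    (IndepFun.prodMk_prodMk_of_indepFun (hW i) (hW j) (hU i) (hU j) (hWindep hij)
      (hUindep hij) ((hWU.comp ((measurable_pi_apply i).prodMk (measurable_pi_apply j))
        ((measurable_pi_apply i).prodMk (measurable_pi_apply j))))).comp hf hf
  have hint : Integrable (fun ω => f (W 0 ω, U 0 ω)) P := by
    rw [← hlaw 0] at hfi
    exact hfi.comp_measurable (hV 0)
  have hmean : ∫ ω, f (W 0 ω, U 0 ω) ∂P = ∫ v, f v ∂(μ.prod ν) := by
    rw [← hlaw 0, integral_map (hV 0).aemeasurable hf.aestronglyMeasurable]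
  rw [← hmean]
  exact strong_law_ae_real (fun i ω => f (W i ω, U i ω)) hint hindep fun i => (hident i).comp hf

end StrongLaw

lemma tendsto_of_forall_eventually_abs_sub_le {ι : Type*} {l : Filter ι} {G H : ι → ℝ} {L : ℝ}
    {E : ℕ → ι → ℝ} {e : ℕ → ℝ} (hH : Tendsto H l (𝓝 L)) (hE : ∀ k, Tendsto (E k) l (𝓝 (e k)))
    (he : Tendsto e atTop (𝓝 0)) (hGH : ∀ k, ∀ᶠ j in l, |G j - H j| ≤ E k j) :
    Tendsto G l (𝓝 L) := by
  rw [Metric.tendsto_nhds]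
  intro ε hε
  obtain ⟨k, hk⟩ := (he.eventually (gt_mem_nhds (by positivity : 0 < ε / 3))).exists
  filter_upwards [hGH k, (hE k).eventually (Metric.ball_mem_nhds _ (by positivity : 0 < ε / 3)),
    hH.eventually (Metric.ball_mem_nhds _ (by positivity : 0 < ε / 3))] with j hGHj hEj hHj
  rw [Real.dist_eq] at hEj hHj
  rw [Real.dist_eq]
  calc |G j - L| ≤ |G j - H j| + |H j - L| := abs_sub_le _ _ _
    _ < ε := by linarith [(abs_lt.1 hEj).2]

lemma abs_sampleMean_sub_le {α : Type*} {f g b : α → ℝ} {v : ℕ → α}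
    (h : ∀ i, |f (v i) - g (v i)| ≤ b (v i)) (n : ℕ) :
    |sampleMean f v n - sampleMean g v n| ≤ sampleMean b v n := by
  rw [sampleMean, sampleMean, sampleMean, ← sub_div, ← Finset.sum_sub_distrib, abs_div,
    Nat.abs_cast]
  gcongr
  exact (Finset.abs_sum_le_sum_abs _ _).trans (Finset.sum_le_sum fun i _ => h i)

lemma tendsto_sampleMean_acceptedLoss {v : ℕ → (Evec d × ℝ) × ℝ} (hv : ∀ i, |(v i).1.2| ≤ 1)
    {θ lam : Evec d} {lams : ℕ → Evec d} (hlams : Tendsto lams atTop (𝓝 lam)) {n : ℕ → ℕ}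
    {L : ℝ} (hL : Tendsto (fun j => sampleMean (acceptedLoss θ lam) v (n j)) atTop (𝓝 L))
    {r e : ℕ → ℝ} (hr : ∀ k, 0 < r k)
    (he : ∀ k, Tendsto (fun j => sampleMean (acceptedLossModulus θ lam (r k)) v (n j)) atTop
      (𝓝 (e k)))
    (he0 : Tendsto e atTop (𝓝 0)) :
    Tendsto (fun j => sampleMean (acceptedLoss θ (lams j)) v (n j)) atTop (𝓝 L) := by
  refine tendsto_of_forall_eventually_abs_sub_le hL he he0 fun k => ?_
  filter_upwards [hlams.eventually (Metric.closedBall_mem_nhds lam (hr k))] with j hj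
  rw [dist_eq_norm] at hj
  exact abs_sampleMean_sub_le (fun i => abs_acceptedLoss_sub_le (hv i) θ hj) _

lemma Qhat_eq_inv_aBar_mul_sampleMean {Ω : Type*} (μ : Measure (Evec d × ℝ))
    (X : ℕ → Ω → Evec d) (Y U : ℕ → Ω → ℝ) (Lam : ℕ → Ω → Evec d) (n : ℕ) (θ : Evec d) (ω : Ω) :
    Qhat μ X Y U Lam n θ ω = (aBar μ (Lam n ω))⁻¹ *
      sampleMean (acceptedLoss θ (Lam n ω)) (fun i => ((X i ω, Y i ω), U i ω)) n := by
  rw [Qhat, sampleMean, mul_inv, div_eq_mul_inv, neg_mul, ← mul_neg, ← Finset.sum_neg_distrib]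
  simp only [acceptedLoss, logisticLoss]
  ring_nf

lemma measurable_Qhat {Ω : Type*} [MeasurableSpace Ω] {μ : Measure (Evec d × ℝ)}
    [IsFiniteMeasure μ] (hY : ∀ᵐ xy ∂μ, xy.2 = 0 ∨ xy.2 = 1) {X : ℕ → Ω → Evec d}
    {Y U : ℕ → Ω → ℝ} {Lam : ℕ → Ω → Evec d} (hXmeas : ∀ i, Measurable (X i))
    (hYmeas : ∀ i, Measurable (Y i)) (hUmeas : ∀ i, Measurable (U i))
    (hLammeas : ∀ n, Measurable (Lam n)) (n : ℕ) (θ : Evec d) :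
    Measurable (Qhat μ X Y U Lam n θ) := by
  simp_rw [funext (Qhat_eq_inv_aBar_mul_sampleMean μ X Y U Lam n θ), sampleMean]
  refine ((continuous_aBar hY).measurable.comp (hLammeas n)).inv.mul
    ((Finset.measurable_sum _ fun i _ => ?_).div_const _)
  exact (measurable_uncurry_acceptedLoss θ).comp
    ((hLammeas n).prodMk (((hXmeas i).prodMk (hYmeas i)).prodMk (hUmeas i)))

/-- **Proposition 2, pointwise convergence.** If `E‖X‖ < ∞` and the (possibly
data-dependent) pilots satisfy `λ_n → λ_∞` in probability, then for each fixed `θ` the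
empirical local case-control risk converges in probability: `Q̂_{λ_n}(θ) → Q_{λ_∞}(θ)`. -/
theorem Qhat_tendstoInMeasure_pointwise {d : ℕ}
    (μ : Measure (Evec d × ℝ)) [IsProbabilityMeasure μ]
    (hY : ∀ᵐ xy ∂μ, xy.2 = 0 ∨ xy.2 = 1)
    (hX : Integrable (fun xy : Evec d × ℝ => ‖xy.1‖) μ)
    {Ω : Type*} [MeasurableSpace Ω] (P : Measure Ω) [IsProbabilityMeasure P]
    (X : ℕ → Ω → Evec d) (Y U : ℕ → Ω → ℝ) (Lam : ℕ → Ω → Evec d)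
    (hXmeas : ∀ i, Measurable (X i)) (hYmeas : ∀ i, Measurable (Y i))
    (hUmeas : ∀ i, Measurable (U i)) (hLammeas : ∀ n, Measurable (Lam n))
    (hiid : iIndepFun (fun i ω => (X i ω, Y i ω)) P)
    (hlaw : ∀ i, Measure.map (fun ω => (X i ω, Y i ω)) P = μ)
    (hUiid : iIndepFun U P)
    (hUlaw : ∀ i, Measure.map (U i) P = volume.restrict (Set.Ioo (0 : ℝ) 1))
    (hUindep : IndepFun (fun ω => fun i => U i ω)
      (fun ω => ((fun i => (X i ω, Y i ω)), fun n => Lam n ω)) P)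
    (lamInf : Evec d)
    (hpilot : TendstoInMeasure P Lam atTop fun _ => lamInf)
    (θ : Evec d) :
    TendstoInMeasure P (fun n ω => Qhat μ X Y U Lam n θ ω) atTop
      fun _ => Qpop μ lamInf θ := by
  have hY' : ∀ᵐ xy ∂μ, |xy.2| ≤ 1 := hY.mono fun _ => abs_le_one_of_eq_zero_or_eq_one
  have hYpath : ∀ᵐ ω ∂P, ∀ i, |Y i ω| ≤ 1 := ae_all_iff.2 fun i =>
    ae_of_ae_map ((hXmeas i).prodMk (hYmeas i)).aemeasurable ((hlaw i).symm ▸ hY')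
  have hslln {f : (Evec d × ℝ) × ℝ → ℝ} (hf : Measurable f) (hfi : Integrable f (μ.prod ν₀)) :=
    ae_tendsto_sampleMean_prodMk (fun i => (hXmeas i).prodMk (hYmeas i)) hUmeas
      (fun _ _ hij => hiid.indepFun hij) (fun _ _ hij => hUiid.indepFun hij)
      (hUindep.comp measurable_id measurable_fst).symm hlaw hUlaw hf hfi
  rw [exists_seq_tendstoInMeasure_atTop_iff fun n =>
    (measurable_Qhat hY hXmeas hYmeas hUmeas hLammeas n θ).aestronglyMeasurable]
  intro ns hns
  obtain ⟨ns', hns', hlam⟩ := (hpilot.comp hns.tendsto_atTop).exists_seq_tendsto_ae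
  refine ⟨ns', hns', ?_⟩
  have hsub := (hns.comp hns').tendsto_atTop
  filter_upwards [hYpath, hslln (measurable_acceptedLoss θ lamInf)
      (integrable_acceptedLoss hY' hX θ lamInf),
    ae_all_iff.2 fun k : ℕ => hslln (measurable_acceptedLossModulus θ lamInf (1 / ((k : ℝ) + 1)))
      (integrable_acceptedLossModulus hY' hX θ lamInf _), hlam] with ω hyω hL hmod hlamω
  have hmean := tendsto_sampleMean_acceptedLoss hyω hlamω (hL.comp hsub) (fun k => by positivity)
    (fun k => (hmod k).comp hsub) ((tendsto_integral_acceptedLossModulus hY' hX θ lamInf).comp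
      tendsto_one_div_add_atTop_nhds_zero_nat)
  rw [integral_acceptedLoss hY hX] at hmean
  have haBar := ((continuous_aBar hY).tendsto lamInf).comp hlamω
  simp_rw [Qhat_eq_inv_aBar_mul_sampleMean]
  rw [← inv_mul_cancel_left₀ (aBar_pos hY lamInf).ne' (Qpop μ lamInf θ)]
  exact (haBar.inv₀ (aBar_pos hY lamInf).ne').mul hmean
end
end

section
/- In the weighted local case-control scheme with multiplier c ≥ 1, correctly specified model f(x) = θ_0'x and pilot λ = θ_0: conditionally on X = x, with p = σ(θ_0'x), the acceptance indicator Z and weight W satisfy E[Y Z W | X = x] = c p(1−p), E[Z W | X = x] = 2 c p(1−p), and E[Z W² | X = x] ≤ c(c+1) p(1−p). -/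
open MeasureTheory ProbabilityTheory Real Filter
open scoped ENNReal NNReal RealInnerProductSpace Topology BoundedContinuousFunction

noncomputable section

variable {d : ℕ}

/-! Accepting with probability `min t 1` and weighting by `max t 1` gives `E[Z W] = t`, because
`min t 1 * max t 1 = t`. With `t = c a(x, y)`, `a(x, 1) = 1 - p` and `a(x, 0) = p` this gives
`E[Y Z W | X = x] = p · c (1 - p)` and `E[Z W | X = x] = p · c (1 - p) + (1 - p) · c p`.
Likewise `E[Z W² | X = x] = c p (1 - p) (max (c (1 - p)) 1 + max (c p) 1)`, and the bracket is at
most `max c 1 + 1 = c + 1`. -/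

theorem sigm_pos (t : ℝ) : 0 < sigm t :=
  div_pos (Real.exp_pos t) (by positivity)

theorem sigm_lt_one (t : ℝ) : sigm t < 1 :=
  (div_lt_one (by positivity)).2 (by linarith [Real.exp_pos t])

section DiracIntegral

variable {α : Type*} [MeasurableSpace α] [MeasurableSingletonClass α]

theorem integrable_smul_dirac (f : α → ℝ) {w : ℝ≥0∞} (hw : w ≠ ∞) (a : α) :
    Integrable f (w • Measure.dirac a) :=
  (integrable_dirac enorm_lt_top).smul_measure hw

theorem integral_ofReal_smul_dirac (f : α → ℝ) {w : ℝ} (hw : 0 ≤ w) (a : α) :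
    ∫ t, f t ∂(ENNReal.ofReal w • Measure.dirac a) = w * f a := by
  rw [integral_smul_measure, integral_dirac, ENNReal.toReal_ofReal hw, smul_eq_mul]

end DiracIntegral

theorem max_one_add_max_one_le {a b : ℝ} (ha : 0 ≤ a) (hb : 0 ≤ b) :
    max a 1 + max b 1 ≤ max (a + b) 1 + 1 := by
  grind

/-- The conditional law of `(Y, Z, W)` given `X = x` in the weighted local case-control scheme
with multiplier `c`, when `p = P(Y = 1 | X = x)` is also the pilot's prediction `σ(θ₀'x)`:
`a(x, 1) = 1 - p` and `a(x, 0) = p`. -/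
def weightedLccLaw (c p : ℝ) : Measure (ℝ × ℝ × ℝ) :=
  ENNReal.ofReal (p * min (c * (1 - p)) 1) • Measure.dirac (1, 1, max (c * (1 - p)) 1) +
    ENNReal.ofReal (p * (1 - min (c * (1 - p)) 1)) • Measure.dirac (1, 0, max (c * (1 - p)) 1) +
    ENNReal.ofReal ((1 - p) * min (c * p) 1) • Measure.dirac (0, 1, max (c * p) 1) +
    ENNReal.ofReal ((1 - p) * (1 - min (c * p) 1)) • Measure.dirac (0, 0, max (c * p) 1)

section WeightedLccLaw

variable {c p : ℝ}

theorem integral_weightedLccLaw (hc : 0 ≤ c) (hp₀ : 0 ≤ p) (hp₁ : p ≤ 1)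
    (f : ℝ × ℝ × ℝ → ℝ) :
    ∫ t, f t ∂(weightedLccLaw c p) =
      p * min (c * (1 - p)) 1 * f (1, 1, max (c * (1 - p)) 1) +
        p * (1 - min (c * (1 - p)) 1) * f (1, 0, max (c * (1 - p)) 1) +
        (1 - p) * min (c * p) 1 * f (0, 1, max (c * p) 1) +
        (1 - p) * (1 - min (c * p) 1) * f (0, 0, max (c * p) 1) := by
  have h₁ : 0 ≤ min (c * (1 - p)) 1 := le_min (by nlinarith) zero_le_one
  have h₂ : 0 ≤ min (c * p) 1 := le_min (by positivity) zero_le_one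
  have h₁' : min (c * (1 - p)) 1 ≤ 1 := min_le_right _ _
  have h₂' : min (c * p) 1 ≤ 1 := min_le_right _ _
  simp only [weightedLccLaw]
  repeat rw [integral_add_measure (by simp [integrable_add_measure, integrable_smul_dirac])
    (integrable_smul_dirac _ ENNReal.ofReal_ne_top _)]
  rw [integral_ofReal_smul_dirac _ (by positivity), integral_ofReal_smul_dirac _ (by nlinarith),
    integral_ofReal_smul_dirac _ (by nlinarith), integral_ofReal_smul_dirac _ (by nlinarith)]

theorem integral_mul_mul_weightedLccLaw (hc : 0 ≤ c) (hp₀ : 0 ≤ p) (hp₁ : p ≤ 1) :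
    ∫ t, t.1 * t.2.1 * t.2.2 ∂(weightedLccLaw c p) = c * p * (1 - p) := by
  rw [integral_weightedLccLaw hc hp₀ hp₁]
  simp only [one_mul, zero_mul, mul_zero, add_zero, mul_assoc, min_mul_max]
  ring

theorem integral_mul_weightedLccLaw (hc : 0 ≤ c) (hp₀ : 0 ≤ p) (hp₁ : p ≤ 1) :
    ∫ t, t.2.1 * t.2.2 ∂(weightedLccLaw c p) = 2 * c * p * (1 - p) := by
  rw [integral_weightedLccLaw hc hp₀ hp₁]
  simp only [one_mul, zero_mul, mul_zero, add_zero, mul_assoc, min_mul_max]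
  ring

theorem integral_mul_sq_weightedLccLaw_le (hc : 1 ≤ c) (hp₀ : 0 ≤ p) (hp₁ : p ≤ 1) :
    ∫ t, t.2.1 * t.2.2 ^ 2 ∂(weightedLccLaw c p) ≤ c * (c + 1) * p * (1 - p) := by
  rw [integral_weightedLccLaw (by linarith) hp₀ hp₁]
  have hmax : max (c * (1 - p)) 1 + max (c * p) 1 ≤ c + 1 := by
    simpa [← mul_add, max_eq_left hc] using
      max_one_add_max_one_le (by nlinarith : 0 ≤ c * (1 - p)) (by nlinarith : 0 ≤ c * p)
  calc _ = c * p * (1 - p) * (max (c * (1 - p)) 1 + max (c * p) 1) := by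
        simp only [one_mul, zero_mul, mul_zero, add_zero, sq, ← mul_assoc]
        rw [mul_assoc _ (min _ _), min_mul_max, mul_assoc _ (min (c * p) 1), min_mul_max]
        ring
    _ ≤ c * p * (1 - p) * (c + 1) := by gcongr
    _ = c * (c + 1) * p * (1 - p) := by ring

end WeightedLccLaw

/-- In the weighted local case-control scheme with multiplier `c ≥ 1`,
correctly specified model and pilot `θ₀`: conditionally on `X = x`, writing `p = σ(θ₀'x)`,
the conditional law `m x` of `(Y, Z, W)` (response, acceptance indicator, weight) satisfies
`E[Y Z W | X = x] = c p (1-p)`, `E[Z W | X = x] = 2 c p (1-p)` and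
`E[Z W² | X = x] ≤ c (c+1) p (1-p)`. -/
theorem weighted_lcc_conditional_moments {d : ℕ}
    (θ0 : Evec d) (c : ℝ) (hc : 1 ≤ c)
    (m : Evec d → Measure (ℝ × ℝ × ℝ))
    (hm : ∀ x : Evec d,
      m x =
        ENNReal.ofReal (sigm ⟪θ0, x⟫ * min (c * (1 - sigm ⟪θ0, x⟫)) 1) •
            Measure.dirac ((1 : ℝ), (1 : ℝ), max (c * (1 - sigm ⟪θ0, x⟫)) 1) +
          ENNReal.ofReal (sigm ⟪θ0, x⟫ * (1 - min (c * (1 - sigm ⟪θ0, x⟫)) 1)) •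
            Measure.dirac ((1 : ℝ), (0 : ℝ), max (c * (1 - sigm ⟪θ0, x⟫)) 1) +
          ENNReal.ofReal ((1 - sigm ⟪θ0, x⟫) * min (c * sigm ⟪θ0, x⟫) 1) •
            Measure.dirac ((0 : ℝ), (1 : ℝ), max (c * sigm ⟪θ0, x⟫) 1) +
          ENNReal.ofReal ((1 - sigm ⟪θ0, x⟫) * (1 - min (c * sigm ⟪θ0, x⟫) 1)) •
            Measure.dirac ((0 : ℝ), (0 : ℝ), max (c * sigm ⟪θ0, x⟫) 1)) :
    ∀ x : Evec d,
      (∫ t, t.1 * t.2.1 * t.2.2 ∂(m x) =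
        c * sigm ⟪θ0, x⟫ * (1 - sigm ⟪θ0, x⟫)) ∧
      (∫ t, t.2.1 * t.2.2 ∂(m x) =
        2 * c * sigm ⟪θ0, x⟫ * (1 - sigm ⟪θ0, x⟫)) ∧
      ∫ t, t.2.1 * t.2.2 ^ 2 ∂(m x) ≤
        c * (c + 1) * sigm ⟪θ0, x⟫ * (1 - sigm ⟪θ0, x⟫) := by
  obtain rfl : m = fun x => weightedLccLaw c (sigm ⟪θ0, x⟫) := funext hm
  intro x
  have hp₀ : 0 ≤ sigm ⟪θ0, x⟫ := (sigm_pos _).le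
  have hp₁ : sigm ⟪θ0, x⟫ ≤ 1 := (sigm_lt_one _).le
  have hc₀ : 0 ≤ c := zero_le_one.trans hc
  exact ⟨integral_mul_mul_weightedLccLaw hc₀ hp₀ hp₁, integral_mul_weightedLccLaw hc₀ hp₀ hp₁,
    integral_mul_sq_weightedLccLaw_le hc hp₀ hp₁⟩
end
end
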